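/- arXiv:math/0106032 — 3 statements merged into one kernel-verified Lean document; each statement's English description precedes it below -/
import Mathlib

section
/- If Σ_{j≥1} c_j e^{2πi q_j x} is the Fourier series of an essentially bounded measurable function on 𝕋¹, where the positive integers q_j satisfy the lacunarity condition q_{j+1}/q_j ≥ λ for some λ > 1, then Σ_{j≥1} |c_j| < ∞. -/
/-!
Choose `s` with `3 ≤ λ ^ s`. Each residue class of indices modulo `s` is then a Hadamard
sequence of ratio `3`, and for such a sequence the signed sums `∑ εᵢ qᵢ`, `εᵢ ∈ {-1, 0, 1}`, are
pairwise distinct. Hence for a finite class `J` and `‖aᵢ‖ = ρ ≤ 1/2`, expanding the Riesz product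
`P x = ∏_{i ∈ J} (1 + 2 Re (aᵢ e^{-2πi qᵢ x}))` shows: `P ≥ 0`, `∫ P = 1`, the coefficient of
`e^{-2πi qᵢ x}` is `aᵢ`, and every other coefficient at a negative frequency has modulus at most
`ρ²`. Pairing `P` with `f` and choosing `aᵢ` with `aᵢ cᵢ = ρ |cᵢ|` gives
`ρ ∑_{i ∈ J} |cᵢ| ≤ ‖f‖_∞ + ρ² ∑_{k < K} |c_k|`. Summing over the `s` classes with `ρ = 1/(2s)`
bounds the partial sums of `∑ |c_k|` uniformly.
-/

open MeasureTheory Finset ComplexConjugate AddCircle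

namespace Sidon

section HadamardGaps

theorem pow_mul_le_of_lacunary {q : ℕ → ℕ} {lam : ℝ} (hlam : 0 ≤ lam)
    (hlac : ∀ j, lam * q j ≤ q (j + 1)) (j n : ℕ) : lam ^ n * q j ≤ q (j + n) := by
  induction n with
  | zero => simp
  | succ n ih =>
    calc lam ^ (n + 1) * q j = lam * (lam ^ n * q j) := by ring
      _ ≤ lam * q (j + n) := mul_le_mul_of_nonneg_left ih hlam
      _ ≤ q (j + (n + 1)) := hlac (j + n)

theorem monotone_of_lacunary {q : ℕ → ℕ} {lam : ℝ} (hlam : 1 ≤ lam)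
    (hlac : ∀ j, lam * q j ≤ q (j + 1)) : Monotone q :=
  monotone_nat_of_le_succ fun j => by
    have : (q j : ℝ) ≤ lam * q j := le_mul_of_one_le_left (by positivity) hlam
    exact_mod_cast this.trans (hlac j)

theorem three_mul_le_of_lacunary {q : ℕ → ℕ} {lam : ℝ} (hlam : 1 ≤ lam)
    (hlac : ∀ j, lam * q j ≤ q (j + 1)) {s : ℕ} (hs : 3 ≤ lam ^ s) {j k : ℕ} (hjk : j + s ≤ k) :
    3 * q j ≤ q k := by
  have h1 := pow_mul_le_of_lacunary (by linarith) hlac j (k - j)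
  rw [Nat.add_sub_cancel' (by omega)] at h1
  have h2 : lam ^ s ≤ lam ^ (k - j) := pow_le_pow_right₀ hlam (by omega)
  have : (3 * q j : ℝ) ≤ q k := by nlinarith [(q j).cast_nonneg (α := ℝ)]
  exact_mod_cast this

theorem add_le_of_lt_of_mod_eq {s i j : ℕ} (hij : i < j) (h : i % s = j % s) : i + s ≤ j := by
  by_contra! hlt
  exact hij.not_ge (Nat.ModEq.le_of_lt_add h.symm hlt)

variable {ι : Type*} [LinearOrder ι] {q : ι → ℕ}

theorem strictMono_of_three_mul_le (hq : ∀ i, 0 < q i) (hlac : ∀ i j, i < j → 3 * q i ≤ q j) :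
    StrictMono q :=
  fun i j hij => by linarith [hq i, hlac i j hij]

theorem two_mul_sum_lt (hq : ∀ i, 0 < q i) (s : Finset ι)
    (hlac : ∀ i ∈ s, ∀ j ∈ s, i < j → 3 * q i ≤ q j) {m : ι}
    (hm : ∀ i ∈ s, 3 * q i ≤ q m) :
    2 * ∑ i ∈ s, q i < q m := by
  induction s using Finset.induction_on_max generalizing m with
  | empty => simpa using hq m
  | insert a s has ih =>
    have hsa : 2 * ∑ i ∈ s, q i < q a :=
      ih (fun i hi j hj => hlac i (mem_insert_of_mem hi) j (mem_insert_of_mem hj))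
        fun i hi => hlac i (mem_insert_of_mem hi) a (mem_insert_self a s) (has i hi)
    rw [sum_insert fun h => (has a h).false]
    linarith [hm a (mem_insert_self a s)]

theorem eq_zero_of_sum_mul_eq_zero (hq : ∀ i, 0 < q i) (s : Finset ι)
    (hlac : ∀ i ∈ s, ∀ j ∈ s, i < j → 3 * q i ≤ q j) {d : ι → ℤ}
    (hd : ∀ i ∈ s, |d i| ≤ 2) (hsum : ∑ i ∈ s, d i * q i = 0) :
    ∀ i ∈ s, d i = 0 := by
  induction s using Finset.induction_on_max with
  | empty => simp
  | insert a s has ih =>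
    have hlac' : ∀ i ∈ s, ∀ j ∈ s, i < j → 3 * q i ≤ q j :=
      fun i hi j hj => hlac i (mem_insert_of_mem hi) j (mem_insert_of_mem hj)
    have hsmall : |∑ i ∈ s, d i * q i| < q a := by
      have := two_mul_sum_lt hq s hlac'
        fun i hi => hlac i (mem_insert_of_mem hi) a (mem_insert_self a s) (has i hi)
      calc |∑ i ∈ s, d i * q i| ≤ ∑ i ∈ s, 2 * (q i : ℤ) :=
            (abs_sum_le_sum_abs _ _).trans <| sum_le_sum fun i hi => by
              rw [abs_mul, Nat.abs_cast]
              exact mul_le_mul_of_nonneg_right (hd i (mem_insert_of_mem hi)) (by positivity)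
        _ < q a := by rw [← mul_sum]; exact_mod_cast this
    rw [sum_insert fun h => (has a h).false] at hsum
    have hda : d a = 0 := by
      by_contra hne
      have : (q a : ℤ) ≤ |d a * q a| := by
        rw [abs_mul, Nat.abs_cast]
        exact le_mul_of_one_le_left (by positivity) (Int.one_le_abs hne)
      rw [eq_neg_of_add_eq_zero_left hsum, abs_neg] at this
      exact this.not_gt hsmall
    rw [hda, zero_mul, zero_add] at hsum
    intro i hi
    rcases mem_insert.1 hi with rfl | hi
    · exact hda
    · exact ih hlac' (fun j hj => hd j (mem_insert_of_mem hj)) hsum i hi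

end HadamardGaps

theorem exists_norm_eq_and_mul_eq (z : ℂ) {ρ : ℝ} (hρ : 0 ≤ ρ) :
    ∃ a : ℂ, ‖a‖ = ρ ∧ a * z = ρ * ‖z‖ := by
  refine ⟨ρ * Complex.exp (-(z.arg : ℂ) * Complex.I), ?_, ?_⟩
  · rw [norm_mul, ← Complex.ofReal_neg, Complex.norm_exp_ofReal_mul_I, Complex.norm_real,
      Real.norm_of_nonneg hρ, mul_one]
  · have hz := Complex.norm_mul_exp_arg_mul_I z
    set θ := z.arg
    calc _ = ρ * ‖z‖ * Complex.exp (-θ * Complex.I + θ * Complex.I) := by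
          rw [Complex.exp_add]; nth_rw 1 [← hz]; ring
      _ = ρ * ‖z‖ := by rw [neg_mul, neg_add_cancel, Complex.exp_zero, mul_one]

theorem norm_integral_smul_le_of_nonneg {α E : Type*} [MeasurableSpace α] [NormedAddCommGroup E]
    [NormedSpace ℝ E] {μ : Measure α} {P : α → ℝ} {f : α → E} {C : ℝ}
    (hP : ∀ᵐ x ∂μ, 0 ≤ P x) (hPi : Integrable P μ) (hf : ∀ᵐ x ∂μ, ‖f x‖ ≤ C) :
    ‖∫ x, P x • f x ∂μ‖ ≤ C * ∫ x, P x ∂μ := by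
  rw [← integral_const_mul]
  refine norm_integral_le_of_norm_le (hPi.const_mul C) ?_
  filter_upwards [hP, hf] with x hPx hfx
  rw [norm_smul, Real.norm_of_nonneg hPx, mul_comm C]
  exact mul_le_mul_of_nonneg_left hfx hPx

theorem norm_fourier_apply {T : ℝ} (n : ℤ) (x : AddCircle T) : ‖fourier n x‖ = 1 :=
  Circle.norm_coe _

theorem fourier_sum_apply {T : ℝ} {κ : Type*} (s : Finset κ) (n : κ → ℤ) (x : AddCircle T) :
    fourier (∑ i ∈ s, n i) x = ∏ i ∈ s, fourier (n i) x := by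
  induction s using Finset.cons_induction with
  | empty => exact fourier_zero
  | cons a s ha ih => rw [sum_cons, prod_cons, fourier_add, ih]

noncomputable section RieszProduct

variable {ι : Type*} [Fintype ι] {T : ℝ}

def signedSum (q : ι → ℕ) (ε : ι → ℤ) : ℤ := ∑ i, ε i * q i

def rieszWeight (a : ℂ) (e : ℤ) : ℂ := if e = 0 then 1 else if e = 1 then a else conj a

def rieszProduct (q : ι → ℕ) (a : ι → ℂ) (x : AddCircle T) : ℝ :=
  ∏ i, (1 + 2 * (a i * fourier (-(q i : ℤ)) x).re)

theorem rieszProduct_nonneg (q : ι → ℕ) {a : ι → ℂ} (ha : ∀ i, ‖a i‖ ≤ 1 / 2)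
    (x : AddCircle T) : 0 ≤ rieszProduct q a x :=
  prod_nonneg fun i _ => by
    have h := Complex.abs_re_le_norm (a i * fourier (-(q i : ℤ)) x)
    rw [norm_mul, norm_fourier_apply, mul_one] at h
    linarith [(abs_le.1 (h.trans (ha i))).1]

theorem continuous_rieszProduct (q : ι → ℕ) (a : ι → ℂ) :
    Continuous (rieszProduct (T := T) q a) := by
  unfold rieszProduct
  fun_prop

theorem ofReal_one_add_two_mul_re (a : ℂ) (n : ℤ) (x : AddCircle T) :
    ((1 + 2 * (a * fourier (-n) x).re : ℝ) : ℂ) =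
      ∑ e ∈ ({-1, 0, 1} : Finset ℤ), rieszWeight a e * fourier (-(e * n)) x := by
  have hre : ((2 * (a * fourier (-n) x).re : ℝ) : ℂ) =
      a * fourier (-n) x + conj a * fourier n x := by
    rw [← Complex.add_conj, map_mul, fourier_neg, Complex.conj_conj]
  rw [sum_insert (by decide), sum_pair (by decide), Complex.ofReal_add, hre]
  simp [rieszWeight, add_assoc, add_comm]

theorem norm_rieszWeight (a : ℂ) (e : ℤ) : ‖rieszWeight a e‖ = if e = 0 then 1 else ‖a‖ := by
  unfold rieszWeight
  split_ifs <;> simp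

variable [DecidableEq ι]

/-- `ε ∈ signVectors ι` selects, in each factor of the Riesz product, the term of frequency
`-εᵢ qᵢ`. -/
def signVectors (ι : Type*) [Fintype ι] [DecidableEq ι] : Finset (ι → ℤ) :=
  Fintype.piFinset fun _ => {-1, 0, 1}

/-- The coefficient of `fourier (-m)` in `rieszProduct q a` (see `ofReal_rieszProduct`). -/
def rieszCoeff (q : ι → ℕ) (a : ι → ℂ) (m : ℤ) : ℂ :=
  ∑ ε ∈ signVectors ι with signedSum q ε = m, ∏ i, rieszWeight (a i) (ε i)

theorem mem_signVectors {ε : ι → ℤ} :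
    ε ∈ signVectors ι ↔ ∀ i, ε i ∈ ({-1, 0, 1} : Finset ℤ) :=
  Fintype.mem_piFinset

theorem abs_le_one_of_mem_signVectors {ε : ι → ℤ} (hε : ε ∈ signVectors ι) (i : ι) :
    |ε i| ≤ 1 := by
  have := mem_signVectors.1 hε i
  simp only [mem_insert, mem_singleton] at this
  rcases this with h | h | h <;> simp [h]

theorem abs_signedSum_le {ε : ι → ℤ} (hε : ε ∈ signVectors ι) (q : ι → ℕ) :
    |signedSum q ε| ≤ ∑ i, (q i : ℤ) :=
  (abs_sum_le_sum_abs _ _).trans <| sum_le_sum fun i _ => by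
    rw [abs_mul, Nat.abs_cast]
    exact mul_le_of_le_one_left (by positivity) (abs_le_one_of_mem_signVectors hε i)

theorem ofReal_rieszProduct (q : ι → ℕ) (a : ι → ℂ) (x : AddCircle T) :
    (rieszProduct q a x : ℂ) = ∑ m ∈ Icc (-∑ i, (q i : ℤ)) (∑ i, (q i : ℤ)),
      rieszCoeff q a m * fourier (-m) x := by
  have hexpand : (rieszProduct q a x : ℂ) = ∑ ε ∈ signVectors ι,
      (∏ i, rieszWeight (a i) (ε i)) * fourier (-signedSum q ε) x := by
    rw [rieszProduct, Complex.ofReal_prod]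
    simp_rw [ofReal_one_add_two_mul_re]
    rw [prod_univ_sum]
    refine sum_congr rfl fun ε _ => ?_
    rw [signedSum, ← sum_neg_distrib, fourier_sum_apply, ← prod_mul_distrib]
  have hmaps : ∀ ε ∈ signVectors ι,
      signedSum q ε ∈ Icc (-∑ i, (q i : ℤ)) (∑ i, (q i : ℤ)) :=
    fun ε hε => mem_Icc.2 (abs_le.1 (abs_signedSum_le hε q))
  rw [hexpand, ← sum_fiberwise_of_maps_to hmaps]
  refine sum_congr rfl fun m _ => ?_
  rw [rieszCoeff, sum_mul]
  exact sum_congr rfl fun ε hε => by rw [(mem_filter.1 hε).2]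

theorem two_le_card_support {ε : ι → ℤ} (hε : ε ∈ signVectors ι) {q : ι → ℕ}
    (hpos : 0 < signedSum q ε) (hq : ∀ i, signedSum q ε ≠ q i) :
    2 ≤ #{i | ε i ≠ 0} := by
  by_contra! hcard
  have hsingle : ∀ i, ε i ≠ 0 → signedSum q ε = ε i * q i := fun i hi =>
    Fintype.sum_eq_single i fun j hji => by
      have : ε j = 0 := by
        by_contra hj
        exact hji (card_le_one.1 (Nat.le_of_lt_succ hcard) j (by simp [hj]) i (by simp [hi]))
      rw [this, zero_mul]
  obtain ⟨i, hi⟩ : ∃ i, ε i ≠ 0 := by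
    by_contra! h
    simp [signedSum, h] at hpos
  have hqi := hq i
  rw [hsingle i hi] at hpos hqi
  have := mem_signVectors.1 hε i
  simp only [mem_insert, mem_singleton] at this
  rcases this with h | h | h
  · rw [h] at hpos
    linarith [(q i).cast_nonneg (α := ℤ)]
  · exact hi h
  · exact hqi (by rw [h, one_mul])

end RieszProduct

section LacunaryRieszProduct

variable {ι : Type*} [Fintype ι] [LinearOrder ι] {q : ι → ℕ}

theorem signedSum_injOn (hq : ∀ i, 0 < q i) (hlac : ∀ i j, i < j → 3 * q i ≤ q j) :
    Set.InjOn (signedSum q) (signVectors ι) := by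
  intro ε hε ε' hε' h
  have hd : ∀ i ∈ univ, (ε - ε') i = 0 := by
    refine eq_zero_of_sum_mul_eq_zero hq univ (fun i _ j _ => hlac i j) (fun i _ => ?_) ?_
    · exact (abs_sub _ _).trans (by linarith [abs_le_one_of_mem_signVectors hε i,
        abs_le_one_of_mem_signVectors hε' i])
    · simpa [signedSum, sub_mul, sum_sub_distrib, sub_eq_zero] using h
  funext i
  exact sub_eq_zero.1 (hd i (mem_univ i))

theorem rieszCoeff_signedSum (hq : ∀ i, 0 < q i) (hlac : ∀ i j, i < j → 3 * q i ≤ q j)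
    (a : ι → ℂ) {ε : ι → ℤ} (hε : ε ∈ signVectors ι) :
    rieszCoeff q a (signedSum q ε) = ∏ i, rieszWeight (a i) (ε i) :=
  sum_eq_single_of_mem ε (mem_filter.2 ⟨hε, rfl⟩) fun _ hε' hne =>
    absurd (signedSum_injOn hq hlac (mem_filter.1 hε').1 hε (mem_filter.1 hε').2) hne

theorem rieszCoeff_zero (hq : ∀ i, 0 < q i) (hlac : ∀ i j, i < j → 3 * q i ≤ q j)
    (a : ι → ℂ) : rieszCoeff q a 0 = 1 := by
  simpa [signedSum, rieszWeight] using
    rieszCoeff_signedSum hq hlac a (ε := 0) (by simp [mem_signVectors])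

theorem rieszCoeff_natCast (hq : ∀ i, 0 < q i) (hlac : ∀ i j, i < j → 3 * q i ≤ q j)
    (a : ι → ℂ) (i : ι) : rieszCoeff q a (q i) = a i := by
  have hε : Pi.single i 1 ∈ signVectors ι := mem_signVectors.2 fun j => by
    rcases eq_or_ne j i with rfl | h <;> simp [*]
  have := rieszCoeff_signedSum hq hlac a hε
  rwa [signedSum, Fintype.sum_eq_single i fun j hj => by simp [hj], Fintype.prod_eq_single i
    fun j hj => by simp [hj, rieszWeight], Pi.single_eq_same, one_mul] at this

theorem norm_rieszCoeff_le (hq : ∀ i, 0 < q i) (hlac : ∀ i j, i < j → 3 * q i ≤ q j)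
    {a : ι → ℂ} {ρ : ℝ} (hρ0 : 0 ≤ ρ) (hρ1 : ρ ≤ 1) (ha : ∀ i, ‖a i‖ = ρ) {m : ℤ}
    (hm : 0 < m) (hmq : ∀ i, m ≠ q i) : ‖rieszCoeff q a m‖ ≤ ρ ^ 2 := by
  by_cases h : ∃ ε ∈ signVectors ι, signedSum q ε = m
  · obtain ⟨ε, hε, rfl⟩ := h
    rw [rieszCoeff_signedSum hq hlac a hε, norm_prod]
    simp only [norm_rieszWeight, ha]
    rw [prod_ite, prod_const_one, one_mul, prod_const]
    exact pow_le_pow_of_le_one hρ0 hρ1 (two_le_card_support hε hm hmq)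
  · rw [rieszCoeff, sum_eq_zero fun ε hε => (h ⟨ε, (mem_filter.1 hε).1, (mem_filter.1 hε).2⟩).elim,
      norm_zero]
    positivity

end LacunaryRieszProduct

section Circle

variable {T : ℝ} [Fact (0 < T)]

theorem norm_fourierCoeff_le {f : AddCircle T → ℂ} {C : ℝ}
    (hf : ∀ᵐ x ∂haarAddCircle, ‖f x‖ ≤ C) (n : ℤ) : ‖fourierCoeff f n‖ ≤ C := by
  have := norm_integral_le_of_norm_le_const (μ := haarAddCircle)
    (f := fun x => fourier (-n) x • f x) (by
      filter_upwards [hf] with x hx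
      rwa [norm_smul, norm_fourier_apply, one_mul])
  rwa [probReal_univ, mul_one] at this

theorem fourierCoeff_one : fourierCoeff (fun _ : AddCircle T => (1 : ℂ)) = Pi.single 0 1 := by
  rw [← fourierCoeff_fourier (T := T) 0]
  exact congrArg fourierCoeff (funext fun _ => fourier_zero.symm)

theorem integral_sum_fourier_mul {f : AddCircle T → ℂ} (hf : Integrable f haarAddCircle)
    (F : Finset ℤ) (b : ℤ → ℂ) :
    ∫ x, (∑ m ∈ F, b m * fourier (-m) x) * f x ∂haarAddCircle =
      ∑ m ∈ F, b m * fourierCoeff f m := by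
  simp_rw [sum_mul, mul_assoc]
  rw [integral_finsetSum _ fun m _ => by
    simpa only [smul_eq_mul] using (hf.fourier_smul (-m)).const_mul (b m)]
  exact sum_congr rfl fun m _ => integral_const_mul _ _

theorem sum_norm_fourierCoeff_Icc_le {f : AddCircle T → ℂ} {q : ℕ → ℕ} (hmono : Monotone q)
    (hzero : ∀ n : ℤ, (∀ j, n ≠ q j) → fourierCoeff f n = 0) {N : ℤ} {K : ℕ} (hK : N < q K) :
    ∑ m ∈ Icc 1 N, ‖fourierCoeff f m‖ ≤ ∑ k ∈ range K, ‖fourierCoeff f (q k)‖ := by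
  rw [← sum_filter_ne_zero]
  refine (sum_le_sum_of_subset_of_nonneg (fun m hm => ?_) fun _ _ _ => norm_nonneg _).trans
    (sum_image_le_of_nonneg (g := fun k => (q k : ℤ)) fun _ _ => norm_nonneg _)
  obtain ⟨hm, hne⟩ := mem_filter.1 hm
  obtain ⟨k, rfl⟩ : ∃ k, m = q k := by
    by_contra! h
    exact hne (by rw [hzero m h, norm_zero])
  refine mem_image.2 ⟨k, mem_range.2 ?_, rfl⟩
  by_contra! hk
  have := hmono hk
  have := (mem_Icc.1 hm).2
  omega

theorem integral_rieszProduct_mul {f : AddCircle T → ℂ} (hf : Integrable f haarAddCircle)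
    (hneg : ∀ m ≤ 0, fourierCoeff f m = 0) {ι : Type*} [Fintype ι] [DecidableEq ι]
    (q : ι → ℕ) (a : ι → ℂ) :
    ∫ x, (rieszProduct q a x : ℂ) * f x ∂haarAddCircle =
      ∑ m ∈ Icc 1 (∑ i, (q i : ℤ)), rieszCoeff q a m * fourierCoeff f m := by
  have hN : (0 : ℤ) ≤ ∑ i, (q i : ℤ) := by positivity
  simp_rw [ofReal_rieszProduct]
  rw [integral_sum_fourier_mul hf]
  refine (sum_subset (Icc_subset_Icc (by linarith) le_rfl) fun m hm hm' => ?_).symm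
  rw [hneg m (by simp only [mem_Icc] at hm hm'; omega), mul_zero]

section LacunaryFamily

variable {ι : Type*} [Fintype ι] [LinearOrder ι] {q : ι → ℕ}

theorem integral_rieszProduct (hq : ∀ i, 0 < q i) (hlac : ∀ i j, i < j → 3 * q i ≤ q j)
    (a : ι → ℂ) : ∫ x, rieszProduct q a x ∂(haarAddCircle : Measure (AddCircle T)) = 1 := by
  apply Complex.ofReal_injective
  have h := integral_sum_fourier_mul (T := T) (integrable_const (1 : ℂ))
    (Icc (-∑ i, (q i : ℤ)) (∑ i, (q i : ℤ))) (rieszCoeff q a)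
  simp only [mul_one, fourierCoeff_one] at h
  rw [← integral_complex_ofReal]
  simp_rw [ofReal_rieszProduct]
  rw [h, Complex.ofReal_one]
  have hN : (0 : ℤ) ≤ ∑ i, (q i : ℤ) := by positivity
  simp only [Pi.single_apply, mul_ite, mul_one, mul_zero, sum_ite_eq', mem_Icc]
  rw [if_pos ⟨by linarith, hN⟩, rieszCoeff_zero hq hlac]

theorem norm_integral_rieszProduct_mul_le (hq : ∀ i, 0 < q i)
    (hlac : ∀ i j, i < j → 3 * q i ≤ q j) {a : ι → ℂ} (ha : ∀ i, ‖a i‖ ≤ 1 / 2)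
    {f : AddCircle T → ℂ} {C : ℝ} (hC : ∀ᵐ x ∂haarAddCircle, ‖f x‖ ≤ C) :
    ‖∫ x, (rieszProduct q a x : ℂ) * f x ∂haarAddCircle‖ ≤ C := by
  simpa only [← Complex.real_smul, integral_rieszProduct hq hlac, mul_one] using
    norm_integral_smul_le_of_nonneg (ae_of_all _ (rieszProduct_nonneg q ha))
      ((continuous_rieszProduct q a).integrable_of_hasCompactSupport
        (HasCompactSupport.of_compactSpace _)) hC

theorem mul_sum_norm_fourierCoeff_le (hq : ∀ i, 0 < q i) (hlac : ∀ i j, i < j → 3 * q i ≤ q j)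
    {f : AddCircle T → ℂ} (hf : Integrable f haarAddCircle) {C : ℝ}
    (hC : ∀ᵐ x ∂haarAddCircle, ‖f x‖ ≤ C) (hneg : ∀ m ≤ 0, fourierCoeff f m = 0)
    {ρ : ℝ} (hρ0 : 0 ≤ ρ) (hρ : ρ ≤ 1 / 2) :
    ρ * ∑ i, ‖fourierCoeff f (q i)‖ ≤
      C + ρ ^ 2 * ∑ m ∈ Icc 1 (∑ i, (q i : ℤ)), ‖fourierCoeff f m‖ := by
  choose a ha hac using fun i => exists_norm_eq_and_mul_eq (fourierCoeff f (q i)) hρ0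
  set N := ∑ i, (q i : ℤ)
  set Q := univ.image fun i => (q i : ℤ)
  have hQ : Q ⊆ Icc 1 N := fun m hm => by
    obtain ⟨i, -, rfl⟩ := mem_image.1 hm
    exact mem_Icc.2 ⟨by exact_mod_cast hq i,
      single_le_sum (f := fun i => (q i : ℤ)) (fun j _ => by positivity) (mem_univ i)⟩
  have hsplit : ∑ m ∈ Icc 1 N, rieszCoeff q a m * fourierCoeff f m =
      ∑ i, a i * fourierCoeff f (q i) + ∑ m ∈ Icc 1 N \ Q, rieszCoeff q a m * fourierCoeff f m := by
    rw [← sum_sdiff hQ, add_comm, sum_image fun i _ j _ h =>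
      (strictMono_of_three_mul_le hq hlac).injective (by exact_mod_cast h)]
    simp only [rieszCoeff_natCast hq hlac]
  have hrest : ‖∑ m ∈ Icc 1 N \ Q, rieszCoeff q a m * fourierCoeff f m‖ ≤
      ρ ^ 2 * ∑ m ∈ Icc 1 N, ‖fourierCoeff f m‖ := by
    refine (norm_sum_le _ _).trans ?_
    rw [mul_sum]
    refine (sum_le_sum fun m hm => ?_).trans
      (sum_le_sum_of_subset_of_nonneg sdiff_subset fun _ _ _ => by positivity)
    obtain ⟨hm, hmQ⟩ := mem_sdiff.1 hm
    rw [norm_mul]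
    refine mul_le_mul_of_nonneg_right (norm_rieszCoeff_le hq hlac hρ0 (by linarith) ha
      (by linarith [(mem_Icc.1 hm).1]) fun i h => hmQ ?_) (norm_nonneg _)
    exact mem_image.2 ⟨i, mem_univ i, h.symm⟩
  have hmain : ‖∑ i, a i * fourierCoeff f (q i)‖ = ρ * ∑ i, ‖fourierCoeff f (q i)‖ := by
    simp_rw [hac, ← mul_sum, ← Complex.ofReal_sum, ← Complex.ofReal_mul, Complex.norm_real,
      Real.norm_of_nonneg (mul_nonneg hρ0 (sum_nonneg fun i _ => norm_nonneg _))]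
  calc ρ * ∑ i, ‖fourierCoeff f (q i)‖ = ‖∑ i, a i * fourierCoeff f (q i)‖ := hmain.symm
    _ ≤ ‖∫ x, (rieszProduct q a x : ℂ) * f x ∂haarAddCircle‖ +
        ‖∑ m ∈ Icc 1 N \ Q, rieszCoeff q a m * fourierCoeff f m‖ := by
      rw [integral_rieszProduct_mul hf hneg, hsplit]
      exact norm_le_add_norm_add _ _
    _ ≤ _ := add_le_add
      (norm_integral_rieszProduct_mul_le hq hlac (fun i => (ha i).trans_le hρ) hC) hrest

end LacunaryFamily

theorem mul_sum_residueClass_le {f : AddCircle T → ℂ} (hf : Integrable f haarAddCircle) {C : ℝ}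
    (hC : ∀ᵐ x ∂haarAddCircle, ‖f x‖ ≤ C) {q : ℕ → ℕ} (hq : ∀ j, 0 < q j) (hmono : Monotone q)
    {s : ℕ} (h3 : ∀ j k, j + s ≤ k → 3 * q j ≤ q k)
    (hzero : ∀ n : ℤ, (∀ j, n ≠ q j) → fourierCoeff f n = 0)
    {ρ : ℝ} (hρ0 : 0 ≤ ρ) (hρ : ρ ≤ 1 / 2) (M r : ℕ) :
    ρ * ∑ k ∈ range M with k % s = r, ‖fourierCoeff f (q k)‖ ≤
      C + ρ ^ 2 * ∑ k ∈ range (M + s), ‖fourierCoeff f (q k)‖ := by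
  set J := {k ∈ range M | k % s = r}
  have hlac : ∀ j ∈ J, ∀ k ∈ J, j < k → 3 * q j ≤ q k := fun j hj k hk hjk =>
    h3 j k (add_le_of_lt_of_mod_eq hjk (by rw [(mem_filter.1 hj).2, (mem_filter.1 hk).2]))
  have hN : ∑ j ∈ J, (q j : ℤ) < q (M + s) := by
    have := two_mul_sum_lt hq J hlac fun j hj =>
      h3 j (M + s) (by linarith [mem_range.1 (mem_filter.1 hj).1])
    exact_mod_cast (by omega : ∑ j ∈ J, q j < q (M + s))
  have hkey := mul_sum_norm_fourierCoeff_le (ι := J) (q := fun j => q j) (fun j => hq j)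
    (fun j k hjk => hlac j j.2 k k.2 hjk) hf hC
    (fun m hm => hzero m fun j h => by linarith [hq j]) hρ0 hρ
  rw [sum_coe_sort J fun j => ‖fourierCoeff f (q j)‖, sum_coe_sort J fun j => (q j : ℤ)] at hkey
  exact hkey.trans (by gcongr; exact sum_norm_fourierCoeff_Icc_le hmono hzero hN)

theorem summable_norm_fourierCoeff_of_lacunary {f : AddCircle T → ℂ}
    (hf : Integrable f haarAddCircle) {C : ℝ} (hC : ∀ᵐ x ∂haarAddCircle, ‖f x‖ ≤ C)
    {q : ℕ → ℕ} (hq : ∀ j, 0 < q j) (hmono : Monotone q) {s : ℕ} (hs : 0 < s)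
    (h3 : ∀ j k, j + s ≤ k → 3 * q j ≤ q k)
    (hzero : ∀ n : ℤ, (∀ j, n ≠ q j) → fourierCoeff f n = 0) :
    Summable fun j => ‖fourierCoeff f (q j)‖ := by
  refine summable_of_sum_range_le (c := (4 * s ^ 2 + s) * C) (fun _ => norm_nonneg _)
    fun M => ?_
  have hs' : (1 : ℝ) ≤ s := by exact_mod_cast hs
  -- `s * ρ ^ 2 = ρ / 2`: the error terms of the `s` classes absorb only half of the main term
  set ρ : ℝ := 1 / (2 * s)
  have hρ : ρ ≤ 1 / 2 := one_div_le_one_div_of_le two_pos (by linarith)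
  have hclasses : ρ * ∑ k ∈ range M, ‖fourierCoeff f (q k)‖ ≤
      s * (C + ρ ^ 2 * ∑ k ∈ range (M + s), ‖fourierCoeff f (q k)‖) :=
    calc ρ * ∑ k ∈ range M, ‖fourierCoeff f (q k)‖
        = ∑ r ∈ range s, ρ * ∑ k ∈ range M with k % s = r, ‖fourierCoeff f (q k)‖ := by
          rw [← sum_fiberwise_of_maps_to fun k _ => mem_range.2 (Nat.mod_lt k hs), mul_sum]
      _ ≤ ∑ r ∈ range s, (C + ρ ^ 2 * ∑ k ∈ range (M + s), ‖fourierCoeff f (q k)‖) :=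
          sum_le_sum fun r _ =>
            mul_sum_residueClass_le hf hC hq hmono h3 hzero (by positivity) hρ M r
      _ = _ := by rw [sum_const, card_range, nsmul_eq_mul]
  have htail : ∑ k ∈ range (M + s), ‖fourierCoeff f (q k)‖ ≤
      ∑ k ∈ range M, ‖fourierCoeff f (q k)‖ + s * C := by
    rw [sum_range_add]
    simpa using sum_le_card_nsmul (range s) _ C fun k _ => norm_fourierCoeff_le hC _
  have hT := sum_nonneg fun k (_ : k ∈ range M) => norm_nonneg (fourierCoeff f (q k))
  simp only [ρ] at hclasses
  field_simp at hclasses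
  nlinarith

end Circle

end Sidon

open Sidon

/-- Sidon's theorem on lacunary Fourier series: if `Σ c_j e^{2πi q_j x}` is the
Fourier series of an essentially bounded measurable function on `𝕋¹`, where the
positive integers `q_j` satisfy `q_{j+1}/q_j ≥ λ` for some `λ > 1`, then
`Σ |c_j| < ∞`. -/
theorem stmt7 (q : ℕ → ℕ) (c : ℕ → ℂ) (lam : ℝ) (hlam : 1 < lam)
    (hq : ∀ j, 0 < q j) (hlac : ∀ j, lam * q j ≤ q (j + 1))
    (f : AddCircle (1:ℝ) → ℂ)
    (hmeas : AEStronglyMeasurable f volume)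
    (hbd : ∃ C : ℝ, ∀ᵐ x ∂(volume : Measure (AddCircle (1:ℝ))), ‖f x‖ ≤ C)
    (hcoeff : ∀ j, fourierCoeff f ((q j : ℤ)) = c j)
    (hzero : ∀ n : ℤ, (∀ j, n ≠ (q j : ℤ)) → fourierCoeff f n = 0) :
    Summable fun j => ‖c j‖ := by
  obtain ⟨C, hC⟩ := hbd
  have hvol : (volume : Measure (AddCircle (1 : ℝ))) = haarAddCircle := by
    rw [volume_eq_smul_haarAddCircle, ENNReal.ofReal_one, one_smul]
  rw [hvol] at hmeas hC
  obtain ⟨s, hs⟩ := pow_unbounded_of_one_lt 3 hlam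
  have hs0 : 0 < s := Nat.pos_of_ne_zero (by rintro rfl; norm_num at hs)
  simp_rw [← hcoeff]
  exact summable_norm_fourierCoeff_of_lacunary (Integrable.mono' (integrable_const C) hmeas hC)
    hC hq (monotone_of_lacunary hlam.le hlac) hs0
    (fun j k hjk => three_mul_le_of_lacunary hlam.le hlac hs.le hjk) hzero
end

section
/- Let f : 𝕋¹ × X → 𝕋¹ × X (X a compact metric space) be a homeomorphism; more specifically let f(x,y) = (x + α, y + φ(x)) on 𝕋² with α irrational and φ : 𝕋¹ → ℝ continuous. If f is not minimal, then there exist a continuous function g : 𝕋¹ → ℝ and r ∈ ℝ such that φ(x) = g(x) - g(x + α) + r for all x. -/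
/-!
Inside the closure of a non-dense orbit of `F` choose a minimal set `M`. Since the rotation is
minimal, `M` meets every vertical circle, and minimality of `M` turns every difference `y - y'` of
two points of `M` over the same base point into a vertical period of `M`. The vertical periods form
a closed subgroup of the circle, proper because `M ≠ 𝕋²`, hence finite, of some exponent `q`. So
`x ↦ q • y` for `(x, y) ∈ M` is a well-defined continuous map `χ : 𝕋 → 𝕋` with
`χ (x + α) = χ x + q φ x`. Lifting through `ℝ → 𝕋` gives `χ x = u x + d • x` with `u` real valued,
and then `u (x + α) - u x + d α - q φ x` is continuous and integer valued, hence constant.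
-/

open Set Function

section MinimalSet

variable {X : Type*} [TopologicalSpace X]

def IsMinimalSet (f : X → X) (M : Set X) : Prop :=
  Minimal (fun A : Set X => A.Nonempty ∧ IsClosed A ∧ MapsTo f A A) M

variable {f : X → X} {M : Set X}

theorem IsMinimalSet.nonempty (hM : IsMinimalSet f M) : M.Nonempty := hM.prop.1

theorem IsMinimalSet.isClosed (hM : IsMinimalSet f M) : IsClosed M := hM.prop.2.1

theorem IsMinimalSet.mapsTo (hM : IsMinimalSet f M) : MapsTo f M M := hM.prop.2.2

theorem IsMinimalSet.eq_of_subset (hM : IsMinimalSet f M) {A : Set X} (hA : A.Nonempty)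
    (hAc : IsClosed A) (hfA : MapsTo f A A) (hAM : A ⊆ M) : A = M :=
  Minimal.eq_of_subset hM ⟨hA, hAc, hfA⟩ hAM

theorem exists_isMinimalSet_subset [CompactSpace X] {Z : Set X} (hZ : Z.Nonempty)
    (hZc : IsClosed Z) (hfZ : MapsTo f Z Z) : ∃ M ⊆ Z, IsMinimalSet f M := by
  refine zorn_superset_nonempty _ (fun c hc hchain hcne => ?_) Z ⟨hZ, hZc, hfZ⟩
  refine ⟨⋂₀ c, ⟨?_, isClosed_sInter fun A hA => (hc hA).2.1, ?_⟩,
    fun A hA => sInter_subset_of_mem hA⟩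
  · have := hcne.to_subtype
    exact IsCompact.nonempty_sInter_of_directed_nonempty_isCompact_isClosed
      (IsChain.directedOn (r := fun A B : Set X => B ⊆ A) hchain.symm) (fun A hA => (hc hA).1)
      (fun A hA => (hc hA).2.1.isCompact) (fun A hA => (hc hA).2.1)
  · exact fun x hx => mem_sInter.2 fun A hA => (hc hA).2.2 (hx A hA)

theorem mapsTo_closure_range_iterate (hf : Continuous f) (x : X) :
    MapsTo f (closure (range fun n => f^[n] x)) (closure (range fun n => f^[n] x)) :=
  MapsTo.closure (fun _ ⟨n, hn⟩ => ⟨n + 1, by simp only [iterate_succ_apply', hn]⟩) hf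

theorem eq_univ_of_mapsTo_of_dense_iterate (hf : ∀ x, Dense (range fun n => f^[n] x))
    {A : Set X} (hA : A.Nonempty) (hAc : IsClosed A) (hfA : MapsTo f A A) : A = univ := by
  obtain ⟨x, hx⟩ := hA
  refine eq_univ_of_univ_subset ?_
  rw [← (hf x).closure_eq, hAc.closure_subset_iff]
  exact range_subset_iff.2 fun n => hfA.iterate n hx

end MinimalSet

theorem continuous_of_isClosed_graph {X Y : Type*} [TopologicalSpace X] [TopologicalSpace Y]
    [CompactSpace Y] {f : X → Y} (h : IsClosed {p : X × Y | p.2 = f p.1}) : Continuous f := by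
  refine continuous_iff_isClosed.2 fun C hC => ?_
  have : f ⁻¹' C = Prod.fst '' ({p : X × Y | p.2 = f p.1} ∩ univ ×ˢ C) := by
    ext x
    constructor
    · exact fun hx => ⟨(x, f x), ⟨rfl, trivial, hx⟩, rfl⟩
    · rintro ⟨⟨x, y⟩, ⟨hy, -, hyC⟩, rfl⟩
      exact (show y = f x from hy) ▸ hyC
  rw [this]
  exact isClosedMap_fst_of_compactSpace _ (h.inter (isClosed_univ.prod hC))

theorem IsCompact.exists_continuous_of_fiberwise_eq {X Y Z : Type*} [TopologicalSpace X]
    [T2Space X] [TopologicalSpace Y] [TopologicalSpace Z] [CompactSpace Z] [T2Space Z]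
    {M : Set (X × Y)} (hM : IsCompact M) (hfib : ∀ x, ∃ y, (x, y) ∈ M) {h : Y → Z}
    (hh : Continuous h) (hconst : ∀ x y y', (x, y) ∈ M → (x, y') ∈ M → h y = h y') :
    ∃ χ : X → Z, Continuous χ ∧ ∀ p ∈ M, χ p.1 = h p.2 := by
  choose s hs using hfib
  have hχ : ∀ p ∈ M, h (s p.1) = h p.2 := fun p hp => hconst _ _ _ (hs p.1) hp
  refine ⟨fun x => h (s x), continuous_of_isClosed_graph ?_, hχ⟩
  have : {p : X × Z | p.2 = h (s p.1)} = Prod.map id h '' M := by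
    ext ⟨x, z⟩
    constructor
    · exact fun hz => ⟨(x, s x), hs x, Prod.ext rfl hz.symm⟩
    · rintro ⟨q, hq, hqp⟩
      rw [← hqp]
      exact (hχ q hq).symm
  rw [this]
  exact (hM.image (continuous_id.prodMap hh)).isClosed

section SkewProduct

variable {X G : Type*} [AddCommGroup G]

def skewProduct (T : X → X) (c : X → G) (p : X × G) : X × G := (T p.1, p.2 + c p.1)

def verticalStabilizer (M : Set (X × G)) : AddSubgroup G where
  carrier := {t | ∀ p ∈ M, (p.1, p.2 + t) ∈ M ∧ (p.1, p.2 - t) ∈ M}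
  zero_mem' p hp := by simpa using hp
  add_mem' {s t} hs ht p hp :=
    ⟨by simpa [add_assoc] using (ht _ (hs p hp).1).1,
      by simpa [sub_sub] using (ht _ (hs p hp).2).2⟩
  neg_mem' {t} ht p hp := by simpa [sub_eq_add_neg, and_comm] using ht p hp

theorem eq_univ_of_verticalStabilizer_eq_top {M : Set (X × G)} (hfib : ∀ x, ∃ y, (x, y) ∈ M)
    (hS : verticalStabilizer M = ⊤) : M = univ := by
  refine eq_univ_of_forall fun p => ?_
  obtain ⟨y, hy⟩ := hfib p.1
  have := ((hS ▸ AddSubgroup.mem_top (p.2 - y) : p.2 - y ∈ verticalStabilizer M) _ hy).1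
  simpa using this

variable [TopologicalSpace X] [TopologicalSpace G] {T : X → X} {c : X → G} {M : Set (X × G)}

theorem IsMinimalSet.exists_mem_fiber [CompactSpace G] (hT : ∀ x, Dense (range fun n => T^[n] x))
    (hM : IsMinimalSet (skewProduct T c) M) (x : X) : ∃ y, (x, y) ∈ M := by
  have hfst : Prod.fst '' M = univ :=
    eq_univ_of_mapsTo_of_dense_iterate hT (hM.nonempty.image _)
      (isClosedMap_fst_of_compactSpace _ hM.isClosed)
      (fun _ ⟨q, hq, hqx⟩ => ⟨_, hM.mapsTo hq, by rw [← hqx]; rfl⟩)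
  obtain ⟨q, hq, rfl⟩ := hfst.symm ▸ mem_univ x
  exact ⟨q.2, hq⟩

variable [IsTopologicalAddGroup G]

theorem continuous_skewProduct (hT : Continuous T) (hc : Continuous c) :
    Continuous (skewProduct T c) := by
  unfold skewProduct
  fun_prop

theorem isClosed_verticalStabilizer (hM : IsClosed M) :
    IsClosed (verticalStabilizer M : Set G) := by
  have : (verticalStabilizer M : Set G) =
      ⋂ p ∈ M, (fun t => (p.1, p.2 + t)) ⁻¹' M ∩ (fun t => (p.1, p.2 - t)) ⁻¹' M := by
    ext t
    simp [verticalStabilizer]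
  rw [this]
  exact isClosed_biInter fun p _ =>
    (hM.preimage (by fun_prop)).inter (hM.preimage (by fun_prop))

theorem IsMinimalSet.mem_of_mem_fiber (hM : IsMinimalSet (skewProduct T c) M) {x : X} {y y' : G}
    (hy : (x, y) ∈ M) (hy' : (x, y') ∈ M) {p : X × G} (hp : p ∈ M) :
    (p.1, p.2 + (y - y')) ∈ M := by
  set τ : X × G → X × G := fun p => (p.1, p.2 + (y - y'))
  -- `M ∩ τ⁻¹ M` is closed, contains `(x, y')`, and is invariant because `τ` commutes with `F`.
  suffices M ∩ τ ⁻¹' M = M from (this.symm ▸ hp : p ∈ M ∩ τ ⁻¹' M).2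
  refine hM.eq_of_subset ⟨(x, y'), hy', by simpa [τ] using hy⟩
    (hM.isClosed.inter (hM.isClosed.preimage (by fun_prop)))
    (fun q hq => ⟨hM.mapsTo hq.1, ?_⟩) inter_subset_left
  have : τ (skewProduct T c q) = skewProduct T c (τ q) := by
    simp only [τ, skewProduct, add_right_comm]
  exact (this ▸ hM.mapsTo hq.2 :)

theorem IsMinimalSet.sub_mem_verticalStabilizer (hM : IsMinimalSet (skewProduct T c) M) {x : X}
    {y y' : G} (hy : (x, y) ∈ M) (hy' : (x, y') ∈ M) : y - y' ∈ verticalStabilizer M :=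
  fun _ hp => ⟨hM.mem_of_mem_fiber hy hy' hp, by
    simpa [← sub_add, sub_eq_add_neg, add_comm] using hM.mem_of_mem_fiber hy' hy hp⟩

end SkewProduct

namespace AddCircle

variable {p : ℝ}

theorem exists_nsmul_eq_zero_of_isClosed [Fact (0 < p)] {S : AddSubgroup (AddCircle p)}
    (hS : IsClosed (S : Set (AddCircle p))) (hS' : S ≠ ⊤) :
    ∃ n : ℕ, 0 < n ∧ ∀ s ∈ S, n • s = 0 := by
  have hnd : ¬ Dense (S : Set (AddCircle p)) := fun hd =>
    hS' (AddSubgroup.coe_eq_univ.1 (hS.closure_eq ▸ hd.closure_eq))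
  rw [dense_addSubgroup_iff_ne_zmultiples] at hnd
  push Not at hnd
  obtain ⟨a, ha, rfl⟩ := hnd
  refine ⟨addOrderOf a, Nat.pos_of_ne_zero ha, fun s hs => ?_⟩
  obtain ⟨k, rfl⟩ := AddSubgroup.mem_zmultiples_iff.1 hs
  rw [smul_comm, addOrderOf_nsmul_eq_zero, smul_zero]

theorem dense_range_iterate_add_coe [Fact (0 < p)] {α : ℝ} (hα : Irrational (α / p))
    (x : AddCircle p) : Dense (range fun n : ℕ => (· + (α : AddCircle p))^[n] x) := by
  simp only [add_right_iterate]
  have h := denseRange_zsmul_iff_nsmul.1 (denseRange_zsmul_coe_iff.2 hα)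
  exact (Homeomorph.addLeft x).surjective.denseRange.comp h (continuous_const_add x)

theorem exists_continuous_eq_coe_add_zsmul {χ : AddCircle p → AddCircle p} (hχ : Continuous χ) :
    ∃ (u : AddCircle p → ℝ) (d : ℤ), Continuous u ∧ ∀ x, χ x = u x + d • x := by
  have cov := isCoveringMap_coe p
  obtain ⟨e, he⟩ := QuotientAddGroup.mk_surjective (χ 0)
  obtain ⟨L, -, hL⟩ := (cov.existsUnique_continuousMap_lifts
    ⟨fun t : ℝ => χ t, hχ.comp (AddCircle.continuous_mk' p)⟩ 0 e he).exists
  have hLt (t : ℝ) : (L t : AddCircle p) = χ t := congrFun hL t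
  -- `L (· + p)` and `L + (L p - L 0)` are lifts of the same map agreeing at `0`.
  have hLp : ∀ t, L (t + p) = L t + (L p - L 0) :=
    congrFun <| cov.eq_of_comp_eq (L.continuous.comp (continuous_add_const p))
      (L.continuous.add continuous_const) (funext fun t => by
        simp only [comp_apply, coe_add, coe_sub, hLt, coe_period, coe_zero, add_zero, sub_self])
      0 (by simp)
  obtain ⟨d, hd⟩ : ∃ d : ℤ, d • p = L p - L 0 := by
    rw [← coe_eq_zero_iff, coe_sub, hLt, hLt, coe_period, coe_zero, sub_self]
  have hper : Periodic (fun t => L t - d * t) p := fun t => by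
    simp only [hLp, ← hd, zsmul_eq_mul]
    ring
  refine ⟨hper.lift, d, continuous_coinduced_dom.2 (L.continuous.sub (by fun_prop)), fun x => ?_⟩
  induction x using QuotientAddGroup.induction_on with | H t => ?_
  rw [hper.lift_coe, ← hLt, ← coe_zsmul, ← coe_add, zsmul_eq_mul]
  ring_nf

theorem exists_continuous_eq_sub_add_const {α : ℝ} {φ : AddCircle p → ℝ} (hφ : Continuous φ)
    {q : ℕ} (hq : 0 < q) {χ : AddCircle p → AddCircle p} (hχ : Continuous χ)
    (h : ∀ x, χ (x + α) = χ x + q • (φ x : AddCircle p)) :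
    ∃ (g : AddCircle p → ℝ) (r : ℝ), Continuous g ∧ ∀ x, φ x = g x - g (x + α) + r := by
  obtain ⟨u, d, hu, hχu⟩ := exists_continuous_eq_coe_add_zsmul hχ
  set E : AddCircle p → ℝ := fun x => u (x + α) - u x + d * α - q * φ x
  have hE : Continuous E := by fun_prop
  have hE_coe (x : AddCircle p) : (E x : AddCircle p) = 0 := by
    have hx := h x
    rw [hχu, hχu, zsmul_add] at hx
    calc (E x : AddCircle p)
        = (u (x + α) + (d • x + d • (α : AddCircle p))) -
            (u x + d • x + q • (φ x : AddCircle p)) := by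
          simp only [E, coe_sub, coe_add, ← zsmul_eq_mul, ← nsmul_eq_mul, coe_zsmul, coe_nsmul]
          abel
      _ = 0 := by rw [hx, sub_self]
  have hE_const (x : AddCircle p) : E x = E 0 :=
    (isCoveringMap_coe p).const_of_comp hE (fun x y => by rw [hE_coe, hE_coe]) x 0
  refine ⟨fun x => -u x / q, (d * α - E 0) / q, by fun_prop, fun x => ?_⟩
  have hx : u (x + α) - u x + d * α - q * φ x = E 0 := hE_const x
  have hφx : φ x = (u (x + α) - u x + d * α - E 0) / q := by
    rw [eq_div_iff (by positivity)]
    linarith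
  rw [hφx]
  ring

end AddCircle

theorem IsMinimalSet.exists_continuous_nsmul_eq {p : ℝ} [Fact (0 < p)] {X : Type*}
    [TopologicalSpace X] [CompactSpace X] [T2Space X] {T : X → X} {c : X → AddCircle p}
    {M : Set (X × AddCircle p)} (hT : ∀ x, Dense (range fun n => T^[n] x))
    (hM : IsMinimalSet (skewProduct T c) M) (hM' : M ≠ univ) :
    ∃ q : ℕ, 0 < q ∧ ∃ χ : X → AddCircle p, Continuous χ ∧ ∀ x, χ (T x) = χ x + q • c x := by
  have hfib := hM.exists_mem_fiber hT
  obtain ⟨q, hq, hqS⟩ := AddCircle.exists_nsmul_eq_zero_of_isClosed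
    (isClosed_verticalStabilizer hM.isClosed) (mt (eq_univ_of_verticalStabilizer_eq_top hfib) hM')
  obtain ⟨χ, hχc, hχ⟩ := hM.isClosed.isCompact.exists_continuous_of_fiberwise_eq hfib
    (continuous_nsmul q) fun x y y' hy hy' =>
      sub_eq_zero.1 (by rw [← nsmul_sub]; exact hqS _ (hM.sub_mem_verticalStabilizer hy hy'))
  refine ⟨q, hq, χ, hχc, fun x => ?_⟩
  obtain ⟨y, hy⟩ := hfib x
  have hx : χ x = q • y := hχ _ hy
  calc χ (T x) = q • (y + c x) := hχ _ (hM.mapsTo hy)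
    _ = χ x + q • c x := by rw [nsmul_add, hx]

/-- Furstenberg's dichotomy: if the skew product `f(x,y) = (x+α, y+φ(x))` on `𝕋²`
(with `α` irrational, `φ` continuous) is not minimal, then `φ` is a continuous
coboundary plus a constant. -/
theorem stmt9 (α : ℝ) (hα : Irrational α) (φ : AddCircle (1:ℝ) → ℝ) (hφ : Continuous φ)
    (F : AddCircle (1:ℝ) × AddCircle (1:ℝ) → AddCircle (1:ℝ) × AddCircle (1:ℝ))
    (hF : ∀ p, F p = (p.1 + (α : AddCircle (1:ℝ)), p.2 + ((φ p.1 : ℝ) : AddCircle (1:ℝ))))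
    (hmin : ¬ ∀ z : AddCircle (1:ℝ) × AddCircle (1:ℝ),
      Dense (Set.range fun n : ℕ => F^[n] z)) :
    ∃ (g : AddCircle (1:ℝ) → ℝ) (r : ℝ), Continuous g ∧
      ∀ x, φ x = g x - g (x + (α : AddCircle (1:ℝ))) + r := by
  obtain ⟨z, hz⟩ := not_forall.1 hmin
  obtain rfl : F = skewProduct (· + (α : AddCircle (1:ℝ))) (fun x => (φ x : AddCircle (1:ℝ))) :=
    funext hF
  have hFc := continuous_skewProduct (continuous_add_const (α : AddCircle (1:ℝ)))
    ((AddCircle.continuous_mk' 1).comp hφ)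
  obtain ⟨M, hMZ, hM⟩ := exists_isMinimalSet_subset (by exact ⟨z, subset_closure ⟨0, rfl⟩⟩)
    isClosed_closure (mapsTo_closure_range_iterate hFc z)
  have hM' : M ≠ univ := fun h => hz (dense_iff_closure_eq.2 (eq_univ_of_univ_subset (h ▸ hMZ)))
  obtain ⟨q, hq, χ, hχ, hχT⟩ := hM.exists_continuous_nsmul_eq
    (AddCircle.dense_range_iterate_add_coe (by rwa [div_one])) hM'
  exact AddCircle.exists_continuous_eq_sub_add_const hφ hq hχ hχT
end

section
/- Let α be irrational, q a positive integer, and p an integer with |α - p/q| < 1/q². Then the finite orbit {x, x+α, x+2α, …, x+qα} (mod 1) is 2/q-dense in ℝ/ℤ for every x: every point of 𝕋¹ is within distance 2/q of some point x + iα mod 1 with 0 ≤ i ≤ q. -/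
/-!
Round the target point to the nearest multiple `j/q`. Since `p` is invertible modulo `q`, the
rational orbit `i • (p/q)`, `i < q`, runs through all of `(1/q)ℤ/ℤ`, so some `i < q` has
`i • (p/q) = j/q`. Replacing `p/q` by `α` moves the `i`-th point by at most `i/q² ≤ 1/q`,
so the total distance is at most `1/(2q) + 1/q ≤ 2/q`.
-/

lemma dist_nsmul_le {E : Type*} [SeminormedAddCommGroup E] (n : ℕ) (a b : E) :
    dist (n • a) (n • b) ≤ n * dist a b := by
  rw [dist_eq_norm, dist_eq_norm, ← nsmul_sub]
  exact norm_nsmul_le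

namespace AddCircle

lemma dist_coe_le_abs_sub {T : ℝ} (s t : ℝ) :
    dist (s : AddCircle T) (t : AddCircle T) ≤ |s - t| := by
  rw [dist_eq_norm, ← coe_sub]
  exact QuotientAddGroup.norm_mk_le_norm

lemma coe_intCast_div_eq_of_modEq {q : ℕ} {a b : ℤ} (h : a ≡ b [ZMOD q]) :
    ((a / q : ℝ) : UnitAddCircle) = ((b / q : ℝ) : UnitAddCircle) := by
  rcases Nat.eq_zero_or_pos q with rfl | hq
  · rw [Int.modEq_zero_iff.mp h]
  obtain ⟨k, hk⟩ := h.dvd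
  have hdiff : (b / q : ℝ) - a / q = (k : ℤ) := by
    rw [← sub_div, ← Int.cast_sub, hk]
    push_cast
    field_simp
  rw [eq_comm, ← sub_eq_zero, ← coe_sub, hdiff, coe_eq_zero_iff]
  exact ⟨k, by simp⟩

lemma exists_lt_nsmul_coe_div_eq {q : ℕ} (hq : 0 < q) {p : ℤ} (hcop : Int.gcd p q = 1)
    (j : ℤ) :
    ∃ i < q, i • ((p / q : ℝ) : UnitAddCircle) = ((j / q : ℝ) : UnitAddCircle) := by
  obtain ⟨u, v, huv⟩ := Int.isCoprime_iff_gcd_eq_one.mpr hcop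
  obtain ⟨i, hiq, hi⟩ := Int.existsUnique_equiv_nat (j * u) (Int.natCast_pos.mpr hq)
  have hinv : u * p ≡ 1 [ZMOD q] := Int.modEq_iff_dvd.mpr ⟨v, by linarith⟩
  have hip : (i : ℤ) * p ≡ j [ZMOD q] := calc
    (i : ℤ) * p ≡ j * u * p [ZMOD q] := hi.mul_right p
    _ = j * (u * p) := mul_assoc ..
    _ ≡ j * 1 [ZMOD q] := hinv.mul_left j
    _ = j := mul_one j
  refine ⟨i, by exact_mod_cast hiq, ?_⟩
  rw [← coe_nsmul, ← coe_intCast_div_eq_of_modEq hip]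
  push_cast
  rw [nsmul_eq_mul, mul_div_assoc]

end AddCircle

lemma exists_abs_sub_intCast_div_le (t : ℝ) {q : ℕ} (hq : 0 < q) :
    ∃ j : ℤ, |t - j / q| ≤ 1 / (2 * q) := by
  have hq' : (0 : ℝ) < q := by exact_mod_cast hq
  refine ⟨round (q * t), ?_⟩
  have h : t - round ((q : ℝ) * t) / q = (q * t - round ((q : ℝ) * t)) / q := by
    field_simp
  rw [h, abs_div, abs_of_pos hq', div_le_div_iff₀ hq' (by positivity)]
  nlinarith [abs_sub_round ((q : ℝ) * t)]

theorem stmt17_general (α : ℝ) (q : ℕ) (hq : 0 < q) (p : ℤ)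
    (hcop : Int.gcd p (q : ℤ) = 1)
    (happ : |α - (p : ℝ) / (q : ℝ)| < 1 / (q : ℝ) ^ 2) :
    ∀ x z : AddCircle (1:ℝ), ∃ i : ℕ, i ≤ q ∧
      dist z (x + i • ((α : ℝ) : AddCircle (1:ℝ))) ≤ 2 / (q : ℝ) := by
  intro x z
  obtain ⟨t, ht⟩ := QuotientAddGroup.mk_surjective (z - x)
  obtain ⟨j, hj⟩ := exists_abs_sub_intCast_div_le t hq
  obtain ⟨i, hiq, hi⟩ := AddCircle.exists_lt_nsmul_coe_div_eq hq hcop j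
  have hperturb : dist (i • ((p / q : ℝ) : UnitAddCircle)) (i • (α : UnitAddCircle))
      ≤ 1 / q := calc
    _ ≤ i * |(p / q : ℝ) - α| :=
      (dist_nsmul_le i _ _).trans (by gcongr; exact AddCircle.dist_coe_le_abs_sub _ _)
    _ ≤ q * (1 / q ^ 2) := by rw [abs_sub_comm]; gcongr
    _ = 1 / q := by field_simp
  refine ⟨i, hiq.le, ?_⟩
  rw [← add_sub_cancel x z, dist_add_left, ← ht]
  calc dist (t : UnitAddCircle) (i • (α : UnitAddCircle))
      ≤ dist (t : UnitAddCircle) ((j / q : ℝ) : UnitAddCircle)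
        + dist (i • ((p / q : ℝ) : UnitAddCircle)) (i • (α : UnitAddCircle)) :=
        hi ▸ dist_triangle _ _ _
    _ ≤ 1 / (2 * q) + 1 / q := add_le_add ((AddCircle.dist_coe_le_abs_sub _ _).trans hj) hperturb
    _ ≤ 2 / q := by field_simp; linarith

/-- If `|α - p/q| < 1/q²` with `gcd(p,q) = 1`, then for every `x` the finite orbit
`{x, x+α, …, x+qα}` (mod 1) is `2/q`-dense in `ℝ/ℤ`. -/
theorem stmt17 (α : ℝ) (hα : Irrational α) (q : ℕ) (hq : 0 < q) (p : ℤ)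
    (hcop : Int.gcd p (q : ℤ) = 1)
    (happ : |α - (p : ℝ) / (q : ℝ)| < 1 / (q : ℝ) ^ 2) :
    ∀ x z : AddCircle (1:ℝ), ∃ i : ℕ, i ≤ q ∧
      dist z (x + i • ((α : ℝ) : AddCircle (1:ℝ))) ≤ 2 / (q : ℝ) :=
  stmt17_general α q hq p hcop happ
end
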